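/- arXiv:1609.05203 — 2 statements merged into one kernel-verified Lean document; each statement's English description precedes it below -/
import Mathlib

section
/- Suppose T = S + D is invertible and write a_j^i = ⟨T⁻¹ e_i, e_j⟩. Then for every i ∈ ℤ and every integer k > 0, assuming all diagonal entries d_i,…,d_{i+k} are nonzero, one has a_{i+k}^i = (−1)^{k} d_i a_i^i · ∏_{m=0}^{k-1} w_{i+m} / ∏_{m=0}^{k} d_{i+m}. -/
open Finset

/-! Comparing the coefficient of `e (j + 1)` on both sides of `(S + D) (T⁻¹ e i) = e i` gives
`w j a_j + d (j + 1) a_{j+1} = 0` for `j + 1 ≠ i`, a two-term recurrence that is solved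
explicitly along `j = i, i + 1, …, i + k - 1`. -/

theorem HilbertBasis.repr_apply_of_apply_eq_smul {ι 𝕜 E : Type*} [RCLike 𝕜]
    [NormedAddCommGroup E] [InnerProductSpace 𝕜 E] (b : HilbertBasis ι 𝕜 E)
    {σ : ι → ι} (hσ : Function.Injective σ) {c : ι → 𝕜} {A : E →L[𝕜] E}
    (hA : ∀ j, A (b j) = c j • b (σ j)) (x : E) (j : ι) :
    b.repr (A x) (σ j) = c j * b.repr x j := by
  classical
  have hAx : HasSum (fun k => (b.repr x k * c k) • b (σ k)) (A x) := by
    simpa only [map_smul, hA, smul_smul] using (b.hasSum_repr x).mapL A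
  have hterm : ∀ k, innerSL 𝕜 (b (σ j)) ((b.repr x k * c k) • b (σ k))
      = if k = j then c j * b.repr x j else 0 := by
    intro k
    have hbσ := orthonormal_iff_ite.mp (b.orthonormal.comp σ hσ) j k
    simp only [Function.comp_apply] at hbσ
    rw [innerSL_apply_apply, inner_smul_right, hbσ]
    by_cases hkj : k = j
    · subst hkj
      simp [mul_comm]
    · simp [hkj, Ne.symm hkj]
  rw [b.repr_apply_apply]
  exact (hAx.mapL (innerSL 𝕜 (b (σ j)))).unique ((hasSum_ite_eq j _).congr_fun hterm)

theorem HilbertBasis.repr_shift_add_diagonal_apply_add_one {𝕜 X : Type*} [RCLike 𝕜]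
    [NormedAddCommGroup X] [InnerProductSpace 𝕜 X] (e : HilbertBasis ℤ 𝕜 X) {w d : ℤ → 𝕜}
    {S D : X →L[𝕜] X} (hS : ∀ i, S (e i) = w i • e (i + 1)) (hD : ∀ i, D (e i) = d i • e i)
    (x : X) (j : ℤ) :
    e.repr ((S + D) x) (j + 1) = w j * e.repr x j + d (j + 1) * e.repr x (j + 1) := by
  rw [add_apply, map_add, lp.coeFn_add, Pi.add_apply,
    e.repr_apply_of_apply_eq_smul (add_left_injective 1) hS]
  congr 1
  exact e.repr_apply_of_apply_eq_smul (σ := id) Function.injective_id hD x (j + 1)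

theorem mul_prod_eq_of_two_term_recurrence {R : Type*} [CommRing R] (f p q : ℕ → R) (k : ℕ)
    (h : ∀ m < k, q (m + 1) * f (m + 1) = -(p m * f m)) :
    (∏ m ∈ range k, q (m + 1)) * f k = (-1) ^ k * f 0 * ∏ m ∈ range k, p m := by
  induction k with
  | zero => simp
  | succ k ih =>
    have ih := ih fun m hm => h m (hm.trans k.lt_succ_self)
    rw [prod_range_succ, prod_range_succ, pow_succ]
    linear_combination (∏ m ∈ range k, q (m + 1)) * h k k.lt_succ_self - p k * ih

theorem eq_div_prod_of_two_term_recurrence {K : Type*} [Field K] (f p q : ℕ → K) (k : ℕ)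
    (h : ∀ m < k, q (m + 1) * f (m + 1) = -(p m * f m)) (hq : ∀ m ≤ k, q m ≠ 0) :
    f k = (-1) ^ k * (q 0 * f 0) * (∏ m ∈ range k, p m) / ∏ m ∈ range (k + 1), q m := by
  have hprod : ∏ m ∈ range k, q (m + 1) ≠ 0 :=
    prod_ne_zero_iff.mpr fun m hm => hq (m + 1) (mem_range.mp hm)
  rw [prod_range_succ', eq_div_iff (mul_ne_zero hprod (hq 0 k.zero_le))]
  linear_combination q 0 * mul_prod_eq_of_two_term_recurrence f p q k h

theorem perturbed_shift_inverse_upper_coeff_general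
    {X : Type*} [NormedAddCommGroup X] [InnerProductSpace ℂ X]
    (e : HilbertBasis ℤ ℂ X) (w d : ℤ → ℂ)
    (S D : X →L[ℂ] X)
    (hS : ∀ i : ℤ, S (e i) = w i • e (i + 1))
    (hD : ∀ i : ℤ, D (e i) = d i • e i)
    (Tinv : X →L[ℂ] X)
    (h1 : (S + D) ∘L Tinv = 1)
    (i : ℤ) (k : ℕ)
    (hd : ∀ m : ℕ, m ≤ k → d (i + m) ≠ 0) :
    e.repr (Tinv (e i)) (i + k)
      = (-1 : ℂ) ^ k * (d i * e.repr (Tinv (e i)) i)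
          * (∏ m ∈ Finset.range k, w (i + m))
          / (∏ m ∈ Finset.range (k + 1), d (i + m)) := by
  have hcol : (S + D) (Tinv (e i)) = e i := by
    simpa using DFunLike.congr_fun h1 (e i)
  have hrec : ∀ m < k, d (i + (m + 1 : ℕ)) * e.repr (Tinv (e i)) (i + (m + 1 : ℕ))
      = -(w (i + m) * e.repr (Tinv (e i)) (i + m)) := by
    intro m _
    have hcoeff := e.repr_shift_add_diagonal_apply_add_one hS hD (Tinv (e i)) (i + m)
    rw [hcol, e.repr_apply_apply, orthonormal_iff_ite.mp e.orthonormal,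
      if_neg (by omega)] at hcoeff
    push_cast
    rw [← add_assoc]
    linear_combination -hcoeff
  simpa using eq_div_prod_of_two_term_recurrence (fun m => e.repr (Tinv (e i)) (i + m))
    (fun m => w (i + m)) (fun m => d (i + m)) k hrec hd

/-- Let `T = S + D` be invertible with inverse `Tinv`, and write `a_j^i = ⟨T⁻¹ e_i, e_j⟩`
(the `j`-th coordinate of `T⁻¹ e_i`). For `i ∈ ℤ` and `k > 0`, if the diagonal entries
`d_i, …, d_{i+k}` are nonzero, then
`a_{i+k}^i = (-1)^k d_i a_i^i ∏_{m=0}^{k-1} w_{i+m} / ∏_{m=0}^{k} d_{i+m}`. -/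
theorem perturbed_shift_inverse_upper_coeff
    {X : Type*} [NormedAddCommGroup X] [InnerProductSpace ℂ X] [CompleteSpace X]
    (e : HilbertBasis ℤ ℂ X) (w d : ℤ → ℂ)
    (S D : X →L[ℂ] X)
    (hS : ∀ i : ℤ, S (e i) = w i • e (i + 1))
    (hD : ∀ i : ℤ, D (e i) = d i • e i)
    (Tinv : X →L[ℂ] X)
    (h1 : (S + D) ∘L Tinv = 1) (h2 : Tinv ∘L (S + D) = 1)
    (i : ℤ) (k : ℕ) (hk : 0 < k)
    (hd : ∀ m : ℕ, m ≤ k → d (i + m) ≠ 0) :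
    e.repr (Tinv (e i)) (i + k)
      = (-1 : ℂ) ^ k * (d i * e.repr (Tinv (e i)) i)
          * (∏ m ∈ Finset.range k, w (i + m))
          / (∏ m ∈ Finset.range (k + 1), d (i + m)) :=
  perturbed_shift_inverse_upper_coeff_general e w d S D hS hD Tinv h1 i k hd
end

section
/- Let n ≥ 1 be an integer, let S_n be the bounded weighted n-shift with bounded weights {w_i}_{i∈ℤ} (S_n e_i = w_i e_{i+n}) and D the bounded diagonal operator with bounded diagonals {d_i}_{i∈ℤ} (D e_i = d_i e_i). For each j ∈ {0,…,n−1}, let T_j be the bounded operator on X acting by T_j e_i = w_{j+in} e_{i+1} + d_{j+in} e_i for all i ∈ ℤ (the weighted shift with weights {w_{j+in}}_{i∈ℤ} plus the diagonal with entries {d_{j+in}}_{i∈ℤ}). Then σ(S_n + D) = σ(T_0) ∪ σ(T_1) ∪ ⋯ ∪ σ(T_{n−1}). -/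
/-!
Split `ℤ` into the residue classes `j + nℤ`. The isometries `V_j : e_i ↦ e_{j+in}` have pairwise
orthogonal ranges spanning `X`, so `V_j† V_k = δ_{jk}` and `∑ V_j V_j† = 1`, and they intertwine:
`(S_n + D) V_j = V_j T_j`. Hence `S_n + D` is the direct sum of the `T_j`, and `z - (S_n + D)` is
invertible exactly when every `z - T_j` is, with inverse `∑ V_j (z - T_j)⁻¹ V_j†`.
-/

open Function ContinuousLinearMap

section Intertwining

variable {A : Type*} [Ring A] {J : Type*} [Fintype J] {a : A} {T V W : J → A}

theorem mul_eq_mul_of_intertwining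
    (hWV : ∀ j, W j * V j = 1) (hWV_ne : ∀ j k, j ≠ k → W j * V k = 0)
    (hVW : ∑ k, V k * W k = 1) (haV : ∀ j, a * V j = V j * T j) (j : J) :
    W j * a = T j * W j := by
  calc W j * a = W j * a * ∑ k, V k * W k := by rw [hVW, mul_one]
    _ = ∑ k, W j * (a * V k) * W k := by simp only [Finset.mul_sum, mul_assoc]
    _ = ∑ k, W j * V k * (T k * W k) := by simp only [haV, mul_assoc]
    _ = T j * W j := by
        rw [Finset.sum_eq_single j (fun k _ hk => by rw [hWV_ne j k (Ne.symm hk), zero_mul])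
          (by simp), hWV, one_mul]

theorem isUnit_iff_forall_isUnit_of_intertwining
    (hWV : ∀ j, W j * V j = 1) (hWV_ne : ∀ j k, j ≠ k → W j * V k = 0)
    (hVW : ∑ k, V k * W k = 1) (haV : ∀ j, a * V j = V j * T j) :
    IsUnit a ↔ ∀ j, IsUnit (T j) := by
  have hWa := mul_eq_mul_of_intertwining hWV hWV_ne hVW haV
  constructor
  · rintro ha j
    obtain ⟨b, hab, hba⟩ := isUnit_iff_exists.mp ha
    refine isUnit_iff_exists.mpr ⟨W j * b * V j, ?_, ?_⟩
    · rw [← mul_assoc, ← mul_assoc, ← hWa, mul_assoc (W j), hab, mul_one, hWV]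
    · rw [mul_assoc, mul_assoc, ← haV, ← mul_assoc b, hba, one_mul, hWV]
  · intro hT
    choose R hTR hRT using fun j => isUnit_iff_exists.mp (hT j)
    refine isUnit_iff_exists.mpr ⟨∑ j, V j * R j * W j, ?_, ?_⟩
    · rw [Finset.mul_sum, ← hVW]
      refine Finset.sum_congr rfl fun j _ => ?_
      rw [← mul_assoc, ← mul_assoc, haV, mul_assoc (V j), hTR, mul_one]
    · rw [Finset.sum_mul, ← hVW]
      refine Finset.sum_congr rfl fun j _ => ?_
      rw [mul_assoc, hWa, ← mul_assoc, mul_assoc (V j), hRT, mul_one]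

theorem spectrum_eq_iUnion_of_intertwining {R : Type*} [CommSemiring R] [Algebra R A]
    (hWV : ∀ j, W j * V j = 1) (hWV_ne : ∀ j k, j ≠ k → W j * V k = 0)
    (hVW : ∑ k, V k * W k = 1) (haV : ∀ j, a * V j = V j * T j) :
    spectrum R a = ⋃ j, spectrum R (T j) := by
  ext r
  have hshift : ∀ j, (algebraMap R A r - a) * V j = V j * (algebraMap R A r - T j) := by
    intro j
    rw [sub_mul, mul_sub, haV, Algebra.commutes]
  simp only [Set.mem_iUnion, spectrum.mem_iff,
    isUnit_iff_forall_isUnit_of_intertwining hWV hWV_ne hVW hshift, not_forall]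

end Intertwining

namespace HilbertBasis

variable {ι 𝕜 E F : Type*} [RCLike 𝕜] [NormedAddCommGroup E] [InnerProductSpace 𝕜 E]
  (e : HilbertBasis ι 𝕜 E)

theorem ext_inner {x y : E} (h : ∀ i, inner 𝕜 (e i) x = inner 𝕜 (e i) y) : x = y :=
  e.repr.injective <| lp.ext <| funext fun i => by simp only [e.repr_apply_apply, h]

theorem continuousLinearMap_ext [NormedAddCommGroup F] [NormedSpace 𝕜 F] {f g : E →L[𝕜] F}
    (h : ∀ i, f (e i) = g (e i)) : f = g := by
  refine ContinuousLinearMap.ext_on (Submodule.dense_iff_topologicalClosure_eq_top.mpr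
    e.dense_span) ?_
  rintro x ⟨i, rfl⟩
  exact h i

variable [CompleteSpace E] {f g : ι → ι}

noncomputable def isometryOfInjective (hf : Injective f) : E →L[𝕜] E :=
  ((e.orthonormal.comp f hf).orthogonalFamily.linearIsometry.comp
    e.repr.toLinearIsometry).toContinuousLinearMap

theorem isometryOfInjective_apply (hf : Injective f) (i : ι) :
    e.isometryOfInjective hf (e i) = e (f i) := by
  classical
  change (e.orthonormal.comp f hf).orthogonalFamily.linearIsometry (e.repr (e i)) = _
  rw [e.repr_self, OrthogonalFamily.linearIsometry_apply_single,
    LinearIsometry.toSpanSingleton_apply, one_smul, comp_apply]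

theorem adjoint_isometryOfInjective_mul_self (hf : Injective f) :
    adjoint (e.isometryOfInjective hf) * e.isometryOfInjective hf = 1 :=
  (isometry_iff_adjoint_comp_self _).mp (LinearIsometry.isometry _)

theorem adjoint_isometryOfInjective_mul_eq_zero (hf : Injective f) (hg : Injective g)
    (hfg : ∀ i i', f i ≠ g i') :
    adjoint (e.isometryOfInjective hf) * e.isometryOfInjective hg = 0 := by
  refine e.continuousLinearMap_ext fun i => e.ext_inner fun i' => ?_
  rw [mul_apply_eq_comp, adjoint_inner_right, e.isometryOfInjective_apply,
    e.isometryOfInjective_apply, e.orthonormal.inner_eq_zero (hfg i' i), zero_apply,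
    inner_zero_right]

variable {J : Type*} (σ : J × ι ≃ ι)

noncomputable def blockIsometry (j : J) : E →L[𝕜] E :=
  e.isometryOfInjective (σ.injective.comp (Prod.mk_right_injective j))

theorem blockIsometry_apply (j : J) (i : ι) : e.blockIsometry σ j (e i) = e (σ (j, i)) :=
  e.isometryOfInjective_apply _ i

theorem adjoint_blockIsometry_mul_self (j : J) :
    adjoint (e.blockIsometry σ j) * e.blockIsometry σ j = 1 :=
  e.adjoint_isometryOfInjective_mul_self _

theorem adjoint_blockIsometry_mul_of_ne {j k : J} (hjk : j ≠ k) :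
    adjoint (e.blockIsometry σ j) * e.blockIsometry σ k = 0 :=
  e.adjoint_isometryOfInjective_mul_eq_zero _ _ fun _ _ h =>
    hjk (Prod.ext_iff.mp (σ.injective h)).1

theorem sum_blockIsometry_mul_adjoint [Fintype J] :
    ∑ j, e.blockIsometry σ j * adjoint (e.blockIsometry σ j) = 1 := by
  refine e.continuousLinearMap_ext fun m => ?_
  obtain ⟨⟨k, i⟩, rfl⟩ := σ.surjective m
  rw [← blockIsometry_apply, ← mul_apply_eq_comp, Finset.sum_mul,
    Finset.sum_eq_single k (fun j _ hjk => by
      rw [mul_assoc, e.adjoint_blockIsometry_mul_of_ne σ hjk, mul_zero]) (by simp),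
    mul_assoc, adjoint_blockIsometry_mul_self, mul_one, one_apply_eq_self]

end HilbertBasis

/-- Spectrum of a perturbed weighted `n`-shift: with `S_n e_i = w_i e_{i+n}` and
`D e_i = d_i e_i`, and for each `j ∈ {0, …, n-1}` the operator `T_j` acting by
`T_j e_i = w_{j+in} e_{i+1} + d_{j+in} e_i` (the weighted shift with weights
`{w_{j+in}}_i` plus the diagonal with entries `{d_{j+in}}_i`), we have
`σ(S_n + D) = σ(T_0) ∪ ⋯ ∪ σ(T_{n-1})`. -/
theorem spectrum_perturbed_n_shift
    {X : Type*} [NormedAddCommGroup X] [InnerProductSpace ℂ X] [CompleteSpace X]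
    (e : HilbertBasis ℤ ℂ X) (n : ℕ) (hn : 1 ≤ n) (w d : ℤ → ℂ)
    (Sn D : X →L[ℂ] X)
    (hSn : ∀ i : ℤ, Sn (e i) = w i • e (i + n))
    (hD : ∀ i : ℤ, D (e i) = d i • e i)
    (T : Fin n → X →L[ℂ] X)
    (hT : ∀ (j : Fin n) (i : ℤ),
      T j (e i) = w ((j : ℤ) + i * n) • e (i + 1) + d ((j : ℤ) + i * n) • e i) :
    spectrum ℂ (Sn + D) = ⋃ j : Fin n, spectrum ℂ (T j) := by
  have : NeZero n := ⟨by omega⟩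
  let σ : Fin n × ℤ ≃ ℤ := (Equiv.prodComm _ _).trans (Int.divModEquiv n).symm
  have hσ : ∀ j i, σ (j, i) = (j : ℤ) + i * n := fun j i => add_comm _ _
  refine spectrum_eq_iUnion_of_intertwining (W := fun j => adjoint (e.blockIsometry σ j))
    (e.adjoint_blockIsometry_mul_self σ) (fun _ _ => e.adjoint_blockIsometry_mul_of_ne σ)
    (e.sum_blockIsometry_mul_adjoint σ) fun j => e.continuousLinearMap_ext fun i => ?_
  simp only [mul_apply_eq_comp, add_apply, e.blockIsometry_apply, hσ, hSn, hD, hT, map_add,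
    map_smul, add_assoc, add_mul, one_mul]
end
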